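/- In the triangular prism K₃ □ K₂, for every pair of distinct colors {i,j} ⊆ {1,2,3} and every proper 3-coloring f, the subgraph induced on f⁻¹(i) ∪ f⁻¹(j) is connected; consequently every Kempe switching applied to a proper 3-coloring of the triangular prism merely permutes two colors globally, and the color-class partition of any proper 3-coloring is invariant under Kempe equivalence. -/

import Mathlib

open SimpleGraph

/-- `f` is a proper `k`-coloring of `G`. -/
def IsProperColoring {V : Type} (G : SimpleGraph V) (k : ℕ) (f : V → Fin k) : Prop :=
  ∀ ⦃u v : V⦄, G.Adj u v → f u ≠ f v

/-- `C` is a connected component of the subgraph of `G` induced on `f⁻¹(i) ∪ f⁻¹(j)`. -/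
def IsKempeComponent {V : Type} (G : SimpleGraph V) {k : ℕ} (f : V → Fin k)
    (i j : Fin k) (C : Set V) : Prop :=
  ∃ (w : V) (hw : w ∈ {v | f v = i ∨ f v = j}),
    C = {x | ∃ hx : x ∈ {v | f v = i ∨ f v = j},
      (G.induce {v | f v = i ∨ f v = j}).Reachable ⟨w, hw⟩ ⟨x, hx⟩}

/-- `g` is obtained from `f` by a Kempe switching: swapping colors `i ≠ j` on a
connected component `C` of the subgraph induced on the two color classes. -/
def KempeStep {V : Type} (G : SimpleGraph V) {k : ℕ} (f g : V → Fin k) : Prop :=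
  ∃ (i j : Fin k) (C : Set V), i ≠ j ∧ IsKempeComponent G f i j C ∧
    (∀ x, x ∉ C → g x = f x) ∧
    (∀ x ∈ C, (f x = i → g x = j) ∧ (f x = j → g x = i))

/-- Kempe equivalence: a finite sequence of Kempe switchings. -/
def KempeEquiv {V : Type} (G : SimpleGraph V) {k : ℕ} (f g : V → Fin k) : Prop :=
  Relation.ReflTransGen (KempeStep G) f g

/-- The replication graph `G_a`: each vertex `i` of `G` is replaced by a clique of
`a i` vertices, with complete joins between cliques along edges of `G`. -/
def replication {n : ℕ} (G : SimpleGraph (Fin n)) (a : Fin n → ℕ) :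
    SimpleGraph (Σ i : Fin n, Fin (a i)) where
  Adj x y := x ≠ y ∧ (x.1 = y.1 ∨ G.Adj x.1 y.1)
  symm := by
    constructor
    rintro x y ⟨hne, h⟩
    refine ⟨hne.symm, ?_⟩
    rcases h with h | h
    · exact Or.inl h.symm
    · exact Or.inr h.symm
  loopless := by constructor; rintro x ⟨hne, _⟩; exact hne rfl

/-- The triangular prism `K₃ □ K₂`. -/
def prism : SimpleGraph (Fin 3 × Fin 2) :=
  (⊤ : SimpleGraph (Fin 3)).boxProd (⊤ : SimpleGraph (Fin 2))

/-!
Each triangle of the prism sees all three colors, so in each triangle the colors `i` and `j`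
sit on two adjacent vertices. Two 2-subsets of a 3-set meet, so some rung `{(x,0),(x,1)}` is
bichromatic in `i, j`, and every other vertex of color `i` or `j` lies on a triangle through an
end of that rung: the two color classes span a connected subgraph. A Kempe switching of a
connected bichromatic subgraph swaps the two colors everywhere, and the image of a proper
coloring under a color permutation is again proper, so along a Kempe chain the coloring only
changes by a permutation of the colors.
-/

section Kempe

variable {V : Type} {G : SimpleGraph V} {k : ℕ} {f g : V → Fin k}

lemma IsProperColoring.perm_comp (hf : IsProperColoring G k f) (σ : Equiv.Perm (Fin k)) :
    IsProperColoring G k (σ ∘ f) :=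
  fun _ _ hadj hc => hf hadj (σ.injective hc)

lemma KempeStep.exists_perm_of_connected (h : KempeStep G f g)
    (hconn : ∀ i j, i ≠ j → (G.induce {v | f v = i ∨ f v = j}).Connected) :
    ∃ σ : Equiv.Perm (Fin k), g = σ ∘ f := by
  obtain ⟨i, j, C, hij, ⟨w, hw, rfl⟩, hout, hin⟩ := h
  have hC : ∀ x, (∃ hx, (G.induce _).Reachable ⟨w, hw⟩ ⟨x, hx⟩) ↔ (f x = i ∨ f x = j) :=
    fun x => ⟨fun ⟨hx, _⟩ => hx, fun hx => ⟨hx, (hconn i j hij).preconnected _ _⟩⟩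
  refine ⟨Equiv.swap i j, funext fun x => ?_⟩
  by_cases hx : f x = i ∨ f x = j
  · have hxC := (hC x).2 hx
    rcases hx with hx | hx
    · rw [Function.comp_apply, hx, Equiv.swap_apply_left, (hin x hxC).1 hx]
    · rw [Function.comp_apply, hx, Equiv.swap_apply_right, (hin x hxC).2 hx]
  · obtain ⟨hi, hj⟩ := not_or.1 hx
    rw [Function.comp_apply, Equiv.swap_apply_of_ne_of_ne hi hj,
      hout x fun hxC => hx ((hC x).1 hxC)]

lemma KempeEquiv.exists_perm_of_connected
    (hconn : ∀ f : V → Fin k, IsProperColoring G k f →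
      ∀ i j, i ≠ j → (G.induce {v | f v = i ∨ f v = j}).Connected)
    (hf : IsProperColoring G k f) (h : KempeEquiv G f g) :
    ∃ σ : Equiv.Perm (Fin k), g = σ ∘ f := by
  induction h with
  | refl => exact ⟨1, rfl⟩
  | tail _ hstep ih =>
    obtain ⟨σ, rfl⟩ := ih
    obtain ⟨τ, rfl⟩ := hstep.exists_perm_of_connected (hconn _ (hf.perm_comp σ))
    exact ⟨τ * σ, rfl⟩

end Kempe

section CompleteBoxProd

variable {α β : Type} {S : Set (α × β)}

lemma reachable_induce_boxProd_top_of_fst_eq_or_snd_eq {a b : α × β} (ha : a ∈ S) (hb : b ∈ S)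
    (h : a.1 = b.1 ∨ a.2 = b.2) :
    (((⊤ : SimpleGraph α) □ (⊤ : SimpleGraph β)).induce S).Reachable ⟨a, ha⟩ ⟨b, hb⟩ := by
  by_cases hab : a = b
  · subst hab; rfl
  · refine Adj.reachable ?_
    simp only [comap_adj, Function.Embedding.subtype_apply, boxProd_adj, top_adj]
    grind [Prod.ext_iff]

lemma connected_induce_boxProd_top_of_forall_mem [Nonempty β] {x : α}
    (hx : ∀ t, (x, t) ∈ S) :
    (((⊤ : SimpleGraph α) □ (⊤ : SimpleGraph β)).induce S).Connected := by
  obtain ⟨t₀⟩ := ‹Nonempty β›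
  refine (connected_iff_exists_forall_reachable _).2 ⟨⟨(x, t₀), hx t₀⟩, ?_⟩
  rintro ⟨⟨y, t⟩, hyt⟩
  exact (reachable_induce_boxProd_top_of_fst_eq_or_snd_eq (hx t₀) (hx t) (Or.inl rfl)).trans
    (reachable_induce_boxProd_top_of_fst_eq_or_snd_eq (hx t) hyt (Or.inr rfl))

end CompleteBoxProd

lemma IsProperColoring.surjective_prism_layer {f : Fin 3 × Fin 2 → Fin 3}
    (hf : IsProperColoring prism 3 f) (t : Fin 2) : Function.Surjective (fun x => f (x, t)) :=
  Finite.surjective_of_injective fun x y hxy => by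
    by_contra hne
    exact hf (by simp [prism, boxProd_adj, hne]) hxy

lemma IsProperColoring.connected_induce_prism {f : Fin 3 × Fin 2 → Fin 3}
    (hf : IsProperColoring prism 3 f) {i j : Fin 3} (hij : i ≠ j) :
    (prism.induce {v | f v = i ∨ f v = j}).Connected := by
  obtain ⟨a₀, ha₀⟩ := hf.surjective_prism_layer 0 i
  obtain ⟨b₀, hb₀⟩ := hf.surjective_prism_layer 0 j
  obtain ⟨a₁, ha₁⟩ := hf.surjective_prism_layer 1 i
  obtain ⟨b₁, hb₁⟩ := hf.surjective_prism_layer 1 j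
  have hpair : ∀ {a b : Fin 3} {t : Fin 2}, f (a, t) = i → f (b, t) = j →
      ({a, b} : Finset (Fin 3)).card = 2 :=
    fun ha hb => Finset.card_pair fun hab => hij (ha ▸ hb ▸ hab ▸ rfl)
  obtain ⟨x, hx⟩ := Finset.inter_nonempty_of_card_lt_card_add_card
    (Finset.subset_univ {a₀, b₀}) (Finset.subset_univ {a₁, b₁})
    (by rw [hpair ha₀ hb₀, hpair ha₁ hb₁]; decide)
  simp only [Finset.mem_inter, Finset.mem_insert, Finset.mem_singleton] at hx
  refine connected_induce_boxProd_top_of_forall_mem (x := x) (Fin.forall_fin_two.2 ⟨?_, ?_⟩)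
  · rcases hx.1 with rfl | rfl
    exacts [Or.inl ha₀, Or.inr hb₀]
  · rcases hx.2 with rfl | rfl
    exacts [Or.inl ha₁, Or.inr hb₁]

/-- for every proper 3-coloring `f` of the triangular prism and
distinct colors `i,j`, the subgraph induced on the two color classes is
connected; consequently every Kempe switching is a global transposition of two
colors, and the color-class partition is invariant under Kempe equivalence. -/
theorem stmt10 :
    (∀ f : Fin 3 × Fin 2 → Fin 3, IsProperColoring prism 3 f →
      ∀ i j : Fin 3, i ≠ j → (prism.induce {v | f v = i ∨ f v = j}).Connected) ∧
    (∀ f g : Fin 3 × Fin 2 → Fin 3, IsProperColoring prism 3 f →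
      KempeStep prism f g → ∃ σ : Equiv.Perm (Fin 3), g = σ ∘ f) ∧
    (∀ f g : Fin 3 × Fin 2 → Fin 3, IsProperColoring prism 3 f →
      KempeEquiv prism f g → ∀ u v, f u = f v ↔ g u = g v) := by
  have hconn : ∀ f : Fin 3 × Fin 2 → Fin 3, IsProperColoring prism 3 f →
      ∀ i j : Fin 3, i ≠ j → (prism.induce {v | f v = i ∨ f v = j}).Connected :=
    fun _ hf _ _ hij => hf.connected_induce_prism hij
  refine ⟨hconn, fun f g hf h => h.exists_perm_of_connected (hconn f hf), ?_⟩
  intro f g hf h u v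
  obtain ⟨σ, rfl⟩ := h.exists_perm_of_connected hconn hf
  exact σ.injective.eq_iff.symm
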